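/- Let f : ℝ → ℝ be continuously differentiable on [0,∞), strictly concave, bounded above, with f(0) = 0, let r > 0 with f'(0) > r, let x_σ > 0 with f'(x_σ) = r and u_σ = f(x_σ)/x_σ − r, and for 0 ≤ u ≤ u_σ let x*(u) > 0 be the unique positive solution of f(x) = (r+u)x. Then x*(u) ≥ x_σ with equality only at u = u_σ, and the equilibrium productivity u ↦ u·x*(u) is strictly increasing on [0, u_σ]; in particular on an admissible control range [0, ū] with ū ≤ u_σ the optimal constant productivity is attained at u = ū. -/

import Mathlib

/-!
Since `f'` is strictly decreasing, `f` is strictly concave, so with `f 0 = 0` the average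
productivity `f x / x` is strictly decreasing. The equilibrium is defined by `f x / x = r + u`,
hence `u ↦ x*(u)` is strictly decreasing and stays above `x_σ`, where `f x / x = r + u_σ`.
At equilibrium `u · x*(u) = f (x*(u)) - r · x*(u)`, and `x ↦ f x - r x` is strictly decreasing
on `[x_σ, ∞)` because `f' < f'(x_σ) = r` there; composing two strictly decreasing maps gives
a strictly increasing one.
-/

open Set

lemma strictConcaveOn_Ici_of_strictAntiOn_deriv {f : ℝ → ℝ} {a : ℝ}
    (hdiff : ∀ x ∈ Ici a, DifferentiableAt ℝ f x) (hanti : StrictAntiOn (deriv f) (Ici a)) :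
    StrictConcaveOn ℝ (Ici a) f :=
  (hanti.mono interior_subset).strictConcaveOn_of_deriv (convex_Ici a)
    fun x hx => (hdiff x hx).continuousAt.continuousWithinAt

lemma StrictConcaveOn.strictAntiOn_div_self {f : ℝ → ℝ} (hf : StrictConcaveOn ℝ (Ici 0) f)
    (hf0 : f 0 = 0) : StrictAntiOn (fun x => f x / x) (Ioi 0) := fun x hx y hy hxy => by
  simpa only [hf0, sub_zero] using
    hf.secant_strict_mono self_mem_Ici (mem_Ici.2 hx.le) (mem_Ici.2 hy.le) hx.ne' hy.ne' hxy

lemma strictAntiOn_sub_deriv_mul_of_strictAntiOn_deriv {f : ℝ → ℝ} {a : ℝ}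
    (hdiff : ∀ x ∈ Ici a, DifferentiableAt ℝ f x) (hanti : StrictAntiOn (deriv f) (Ici a)) :
    StrictAntiOn (fun x => f x - deriv f a * x) (Ici a) := by
  have hcont : ContinuousOn (fun x => f x - deriv f a * x) (Ici a) := fun x hx =>
    ((hdiff x hx).sub (differentiableAt_id.const_mul _)).continuousAt.continuousWithinAt
  refine strictAntiOn_of_deriv_neg (convex_Ici a) hcont fun x hx => ?_
  rw [interior_Ici] at hx
  have hx' : x ∈ Ici a := mem_Ici.2 (le_of_lt hx)
  rw [((hdiff x hx').hasDerivAt.fun_sub ((hasDerivAt_id' x).const_mul _)).deriv, mul_one, sub_neg]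
  exact hanti self_mem_Ici hx' hx

theorem equilibrium_productivity_increasing_general
    (f : ℝ → ℝ) (r xσ uσ : ℝ) (xs : ℝ → ℝ)
    (hdiff : ∀ x ∈ Set.Ici (0 : ℝ), DifferentiableAt ℝ f x)
    (hconc : StrictAntiOn (deriv f) (Set.Ici (0 : ℝ)))
    (hf0 : f 0 = 0)
    (hxσ : 0 < xσ)
    (hxσr : deriv f xσ = r)
    (huσ : uσ = f xσ / xσ - r)
    (hxs : ∀ u ∈ Set.Icc (0 : ℝ) uσ, 0 < xs u ∧ f (xs u) = (r + u) * xs u) :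
    (∀ u ∈ Set.Icc (0 : ℝ) uσ, xσ ≤ xs u ∧ (xs u = xσ → u = uσ)) ∧
    StrictMonoOn (fun u => u * xs u) (Set.Icc (0 : ℝ) uσ) ∧
    (∀ ubar : ℝ, 0 ≤ ubar → ubar ≤ uσ →
      ∀ u ∈ Set.Icc (0 : ℝ) ubar, u * xs u ≤ ubar * xs ubar) := by
  have hslope := (strictConcaveOn_Ici_of_strictAntiOn_deriv hdiff hconc).strictAntiOn_div_self hf0
  have hxs_pos : MapsTo xs (Icc 0 uσ) (Ioi 0) := fun u hu => (hxs u hu).1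
  have hslope_xs : ∀ u ∈ Icc 0 uσ, f (xs u) / xs u = r + u := fun u hu => by
    rw [(hxs u hu).2, mul_div_cancel_right₀ _ (hxs u hu).1.ne']
  have hslope_xσ : f xσ / xσ = r + uσ := by rw [huσ]; ring
  have hxσ_le : ∀ u ∈ Icc 0 uσ, xσ ≤ xs u := fun u hu =>
    (hslope.le_iff_ge (hxs_pos hu) hxσ).1 
      (by simpa only [hslope_xs u hu, hslope_xσ, add_le_add_iff_left] using hu.2)
  have hxs_anti : StrictAntiOn xs (Icc 0 uσ) := fun u hu v hv huv =>
    (hslope.lt_iff_gt (hxs_pos hu) (hxs_pos hv)).1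
      (by simp only [hslope_xs u hu, hslope_xs v hv, add_lt_add_iff_left, huv])
  have hnet : StrictAntiOn (fun x => f x - r * x) (Ici xσ) := hxσr ▸
    strictAntiOn_sub_deriv_mul_of_strictAntiOn_deriv (fun x hx => hdiff x (hxσ.le.trans hx))
      (hconc.mono (Ici_subset_Ici.2 hxσ.le))
  have hmono : StrictMonoOn (fun u => u * xs u) (Icc 0 uσ) :=
    (hnet.comp hxs_anti hxσ_le).congr fun u hu => by
      simp only [Function.comp_apply, (hxs u hu).2]; ring
  refine ⟨fun u hu => ⟨hxσ_le u hu, fun he => ?_⟩, hmono, ?_⟩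
  · exact add_left_cancel ((hslope_xs u hu).symm.trans (he ▸ hslope_xσ))
  · exact fun ubar h0 h1 u hu => hmono.monotoneOn ⟨hu.1, hu.2.trans h1⟩ ⟨h0, h1⟩ hu.2

/-- On `[0, u_σ]` the positive equilibrium `x*(u)` stays above `x_σ` (with equality only
at `u = u_σ`) and the equilibrium productivity `u ↦ u · x*(u)` is strictly increasing; in
particular with an admissible control range `[0, ū]`, `ū ≤ u_σ`, the optimal constant
productivity is attained at `u = ū`. -/
theorem equilibrium_productivity_increasing
    (f : ℝ → ℝ) (r xσ uσ : ℝ) (xs : ℝ → ℝ)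
    (hdiff : ∀ x ∈ Set.Ici (0 : ℝ), DifferentiableAt ℝ f x)
    (hderiv_cont : ContinuousOn (deriv f) (Set.Ici (0 : ℝ)))
    (hconc : StrictAntiOn (deriv f) (Set.Ici (0 : ℝ)))
    (hbdd : BddAbove (f '' Set.Ici (0 : ℝ)))
    (hf0 : f 0 = 0)
    (hr : 0 < r)
    (hr' : r < deriv f 0)
    (hxσ : 0 < xσ)
    (hxσr : deriv f xσ = r)
    (huσ : uσ = f xσ / xσ - r)
    (hxs : ∀ u ∈ Set.Icc (0 : ℝ) uσ, 0 < xs u ∧ f (xs u) = (r + u) * xs u) :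
    (∀ u ∈ Set.Icc (0 : ℝ) uσ, xσ ≤ xs u ∧ (xs u = xσ → u = uσ)) ∧
    StrictMonoOn (fun u => u * xs u) (Set.Icc (0 : ℝ) uσ) ∧
    (∀ ubar : ℝ, 0 ≤ ubar → ubar ≤ uσ →
      ∀ u ∈ Set.Icc (0 : ℝ) ubar, u * xs u ≤ ubar * xs ubar) :=
  equilibrium_productivity_increasing_general f r xσ uσ xs hdiff hconc hf0 hxσ hxσr huσ hxs
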